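/- For all integers n ≥ 0, p_{-2}(5n+2) ≡ 0 (mod 5), where p_{-2}(n) is the number of 2-colored partitions of n. -/

import Mathlib

/-!
Modulo `5` we have `f ^ 5 = f(q⁵)` for every power series `f`, so with `F = ∏ (1 - qⁱ)` and
`P = F⁻¹` the generating function of partitions, `∑ p₋₂(n) qⁿ = P² = F³ · P⁵ ≡ F³ · P(q⁵)`.
By Jacobi's identity `F³ = ∑ (-1)ᵏ (2k + 1) q^(k(k+1)/2)` only triangular exponents occur in `F³`,
and no triangular number is `≡ 2 (mod 5)`; hence the coefficient of `q^(5n+2)` vanishes.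

Only the support of `F³` is needed, and it is read off from finite products: differentiating the
`q`-binomial theorem `∏_{i ≤ 2n} (qⁱ z - qⁿ) = ∑ₖ q^(k choose 2) [2n+1, k]_q (-qⁿ)^(2n+1-k) zᵏ`
at `z = 1`, where the factor `i = n` vanishes, expresses `(q; q)ₙ²` through Gaussian binomials,
and `(q; q)ₙ [2n+1, k]_q ≡ 1` modulo a power of `q` large enough that only the triangular
exponents survive in `(q; q)ₙ³`.
-/

/-- The number of `k`-colored partitions of `n`: a `k`-colored partition is a
`k`-tuple of ordinary partitions whose sizes sum to `n`. -/
def coloredPartitions (k n : ℕ) : ℕ :=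
  ∑ c ∈ Finset.Nat.antidiagonalTuple k n, ∏ i, Fintype.card (Nat.Partition (c i))

open Finset

section QAnalogues

variable {A : Type*} [CommRing A] (q : A)

def qPochhammer (n : ℕ) : A := ∏ i ∈ range n, (1 - q ^ (i + 1))

-- `m - k` truncates only when `k > m`, and then `gaussBinom q m k = 0`.
def gaussBinom : ℕ → ℕ → A
  | _, 0 => 1
  | 0, _ + 1 => 0
  | m + 1, k + 1 => gaussBinom m (k + 1) + q ^ (m - k) * gaussBinom m k

@[simp]
theorem qPochhammer_zero : qPochhammer q 0 = 1 := prod_range_zero _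

theorem qPochhammer_succ (n : ℕ) : qPochhammer q (n + 1) = qPochhammer q n * (1 - q ^ (n + 1)) :=
  prod_range_succ _ _

@[simp]
theorem gaussBinom_zero_right (m : ℕ) : gaussBinom q m 0 = 1 := by
  cases m <;> rfl

theorem gaussBinom_succ_succ (m k : ℕ) :
    gaussBinom q (m + 1) (k + 1) = gaussBinom q m (k + 1) + q ^ (m - k) * gaussBinom q m k :=
  rfl

theorem gaussBinom_eq_zero_of_lt {m k : ℕ} (h : m < k) : gaussBinom q m k = 0 := by
  induction m generalizing k with
  | zero => obtain ⟨k, rfl⟩ := Nat.exists_eq_add_one_of_ne_zero h.ne'; rfl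
  | succ m ih =>
    obtain ⟨k, rfl⟩ := Nat.exists_eq_add_one_of_ne_zero (Nat.ne_zero_of_lt h)
    rw [gaussBinom_succ_succ, ih (by omega), ih (by omega), mul_zero, add_zero]

theorem gaussBinom_mul_qPochhammer_mul_qPochhammer {m k : ℕ} (h : k ≤ m) :
    gaussBinom q m k * qPochhammer q k * qPochhammer q (m - k) = qPochhammer q m := by
  induction m generalizing k with
  | zero => obtain rfl := Nat.le_zero.mp h; simp
  | succ m ih =>
    obtain _ | k := k
    · simp
    have hsecond := ih (Nat.le_of_succ_le_succ h)
    have hfirst : gaussBinom q m (k + 1) * qPochhammer q (k + 1) * qPochhammer q (m - k) =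
        qPochhammer q m * (1 - q ^ (m - k)) := by
      rcases (Nat.le_of_succ_le_succ h).lt_or_eq with hk | rfl
      · rw [show m - k = m - (k + 1) + 1 by omega, qPochhammer_succ q (m - (k + 1)), ← mul_assoc,
          ih hk, show m - (k + 1) + 1 = m - k by omega]
      · simp [gaussBinom_eq_zero_of_lt]
    rw [gaussBinom_succ_succ, Nat.add_sub_add_right, qPochhammer_succ q m,
      show q ^ (m + 1) = q ^ (m - k) * q ^ (k + 1) by rw [← pow_add]; congr 1; omega]
    linear_combination hfirst + q ^ (m - k) * (1 - q ^ (k + 1)) * hsecond +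
      q ^ (m - k) * gaussBinom q m k * qPochhammer q (m - k) * qPochhammer_succ q k

theorem pow_succ_dvd_qPochhammer_sub {s a b : ℕ} (ha : s ≤ a) (hb : s ≤ b) :
    q ^ (s + 1) ∣ qPochhammer q a - qPochhammer q b := by
  have key : ∀ a, s ≤ a → q ^ (s + 1) ∣ qPochhammer q a - qPochhammer q s := by
    intro a ha
    induction a, ha using Nat.le_induction with
    | base => simp
    | succ a hsa ih =>
      rw [qPochhammer_succ, show qPochhammer q a * (1 - q ^ (a + 1)) - qPochhammer q s =
        qPochhammer q a - qPochhammer q s - q ^ (a + 1) * qPochhammer q a by ring]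
      exact dvd_sub ih (dvd_mul_of_dvd_left (pow_dvd_pow q (by omega)) _)
  simpa using dvd_sub (key a ha) (key b hb)

theorem dvd_qPochhammer_sub_one (a : ℕ) : q ∣ qPochhammer q a - 1 := by
  simpa using pow_succ_dvd_qPochhammer_sub q (Nat.zero_le a) le_rfl

theorem pow_dvd_of_pow_dvd_mul_of_dvd_sub_one {f g : A} (hg : q ∣ g - 1) {t : ℕ}
    (h : q ^ t ∣ f * g) : q ^ t ∣ f := by
  induction t with
  | zero => simp
  | succ t ih =>
    obtain ⟨f', hf'⟩ := ih (dvd_trans (pow_dvd_pow q t.le_succ) h)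
    obtain ⟨g', hg'⟩ := hg
    have hf : f = f * g - q ^ (t + 1) * (f' * g') := by
      rw [pow_succ]; linear_combination (-f) * hg' - q * g' * hf'
    rw [hf]
    exact dvd_sub h (dvd_mul_right _ _)

theorem pow_dvd_qPochhammer_mul_gaussBinom_sub_one (n : ℕ) {m k : ℕ} (hk : k ≤ m) :
    q ^ (min n (min k (m - k)) + 1) ∣ qPochhammer q n * gaussBinom q m k - 1 := by
  refine pow_dvd_of_pow_dvd_mul_of_dvd_sub_one q
    (g := qPochhammer q k * qPochhammer q (m - k)) ?_ ?_
  · rw [show qPochhammer q k * qPochhammer q (m - k) - 1 =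
      (qPochhammer q k - 1) * qPochhammer q (m - k) + (qPochhammer q (m - k) - 1) by ring]
    exact dvd_add (dvd_mul_of_dvd_left (dvd_qPochhammer_sub_one q k) _)
      (dvd_qPochhammer_sub_one q _)
  · have hprod := gaussBinom_mul_qPochhammer_mul_qPochhammer q hk
    rw [show (qPochhammer q n * gaussBinom q m k - 1) * (qPochhammer q k * qPochhammer q (m - k)) =
        (qPochhammer q n - qPochhammer q k) * qPochhammer q m +
          qPochhammer q k * (qPochhammer q m - qPochhammer q (m - k)) by
      linear_combination qPochhammer q n * hprod]
    exact dvd_add (dvd_mul_of_dvd_left (pow_succ_dvd_qPochhammer_sub q (by omega) (by omega)) _)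
      (dvd_mul_of_dvd_right (pow_succ_dvd_qPochhammer_sub q (by omega) (by omega)) _)

open Polynomial in
theorem coeff_prod_range_C_mul_X_add_C (y : A) (m k : ℕ) :
    (∏ i ∈ range m, (C (q ^ i) * X + C y)).coeff k =
      q ^ k.choose 2 * gaussBinom q m k * y ^ (m - k) := by
  induction m generalizing k with
  | zero => cases k <;> simp [gaussBinom, coeff_one]
  | succ m ih =>
    rw [prod_range_succ, mul_add, ← mul_assoc, coeff_add, coeff_mul_C]
    cases k with
    | zero => simp only [coeff_mul_X_zero, zero_add, ih]; simp [pow_succ]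
    | succ k =>
      have hy : gaussBinom q m (k + 1) * y ^ (m - (k + 1)) * y =
          gaussBinom q m (k + 1) * y ^ (m - k) := by
        rcases lt_or_ge k m with hk | hk
        · rw [mul_assoc, ← pow_succ, show m - (k + 1) + 1 = m - k by omega]
        · simp [gaussBinom_eq_zero_of_lt q (Nat.lt_succ_of_le hk)]
      have hq : q ^ k.choose 2 * gaussBinom q m k * q ^ m =
          q ^ (k + 1).choose 2 * (q ^ (m - k) * gaussBinom q m k) := by
        rcases le_or_gt k m with hk | hk
        · have hch : (k + 1).choose 2 = k.choose 2 + k := by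
            simp [Nat.choose_succ_succ', add_comm]
          rw [hch, ← mul_assoc, ← pow_add, mul_right_comm, ← pow_add]
          congr 2; omega
        · simp [gaussBinom_eq_zero_of_lt q hk]
      rw [coeff_mul_X, coeff_mul_C, ih, ih, gaussBinom_succ_succ, Nat.add_sub_add_right]
      linear_combination y ^ (m - k) * hq + q ^ (k + 1).choose 2 * hy

theorem prod_range_pow_sub_pow (n : ℕ) :
    ∏ i ∈ range n, (q ^ i - q ^ n) = q ^ n.choose 2 * qPochhammer q n := by
  have hfactor : ∀ i ∈ range n, q ^ i - q ^ n = q ^ i * (1 - q ^ (n - 1 - i + 1)) := by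
    intro i hi
    rw [mul_sub, mul_one, ← pow_add, show i + (n - 1 - i + 1) = n by
      have := mem_range.mp hi; omega]
  rw [prod_congr rfl hfactor, prod_mul_distrib, prod_pow_eq_pow_sum, sum_range_id,
    ← Nat.choose_two_right, qPochhammer, prod_range_reflect (fun j => 1 - q ^ (j + 1))]

theorem prod_range_pow_add_sub_pow (n : ℕ) :
    ∏ x ∈ range n, (q ^ (n + 1 + x) - q ^ n) = (-q ^ n) ^ n * qPochhammer q n := by
  have hfactor : ∀ x ∈ range n, q ^ (n + 1 + x) - q ^ n = -q ^ n * (1 - q ^ (x + 1)) := by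
    intro x _
    rw [show n + 1 + x = n + (x + 1) by ring, pow_add]; ring
  rw [prod_congr rfl hfactor, prod_mul_distrib, prod_const, card_range, qPochhammer]

open Polynomial in
theorem eval_one_derivative_eq_sum {p : A[X]} {m : ℕ} (hp : p.natDegree < m) :
    (derivative p).eval 1 = ∑ k ∈ range m, p.coeff k * k := by
  rw [derivative_eval, sum_over_range' _ (by simp) m hp]
  simp

open Polynomial in
theorem neg_one_pow_mul_qPochhammer_sq (n : ℕ) :
    (-1) ^ n * q ^ (n.choose 2 + n + n * n) * qPochhammer q n ^ 2 =
      ∑ k ∈ range (2 * n + 2),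
        q ^ k.choose 2 * gaussBinom q (2 * n + 1) k * (-q ^ n) ^ (2 * n + 1 - k) * k := by
  set g : ℕ → A[X] := fun i => C (q ^ i) * X + C (-q ^ n)
  have hcoeff := coeff_prod_range_C_mul_X_add_C q (-q ^ n) (2 * n + 1)
  have hdeg : (∏ i ∈ range (2 * n + 1), g i).natDegree < 2 * n + 2 := by
    refine Nat.lt_succ_of_le (natDegree_le_iff_coeff_eq_zero.mpr fun k hk => ?_)
    rw [hcoeff, gaussBinom_eq_zero_of_lt q hk, mul_zero, zero_mul]
  simp_rw [← hcoeff]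
  rw [← eval_one_derivative_eq_sum hdeg, show 2 * n + 1 = n + 1 + n by ring,
    prod_range_add, prod_range_succ]
  have hgn : (g n).eval 1 = 0 := by simp [g]
  simp only [derivative_mul, eval_add, eval_mul, hgn, eval_prod]
  simp [g, ← sub_eq_add_neg, prod_range_pow_sub_pow, prod_range_pow_add_sub_pow]
  ring

end QAnalogues

theorem exists_choose_two_add_mul_eq {n k : ℕ} (hk : k ≤ 2 * n + 1) :
    ∃ j : ℕ, k.choose 2 + n * (2 * n + 1 - k) = n.choose 2 + n + n * n + j.choose 2 ∧
      n ≤ j.choose 2 + min k (2 * n + 1 - k) := by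
  have hj : ∀ d, d ≤ (d + 1).choose 2 := fun d => by
    simp [Nat.choose_succ_succ']
  rcases le_or_gt k n with hkn | hkn
  · obtain ⟨d, rfl⟩ := Nat.exists_eq_add_of_le hkn
    refine ⟨d + 1, ?_, by have := hj d; omega⟩
    qify [show k ≤ 2 * (k + d) + 1 by omega]
    simp only [Nat.cast_choose_two]
    push_cast
    ring
  · obtain ⟨d, rfl⟩ := Nat.exists_eq_add_of_lt hkn
    refine ⟨d + 1, ?_, by have := hj d; omega⟩
    have hd : d ≤ n := by omega
    rw [show 2 * n + 1 - (n + d + 1) = n - d by omega]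
    qify [hd]
    simp only [Nat.cast_choose_two]
    push_cast
    ring

theorem choose_two_ne_of_mod_five {N : ℕ} (hN : N % 5 = 2) (j : ℕ) : j.choose 2 ≠ N := by
  intro h
  obtain _ | i := j
  · simp at h; omega
  have h2 : (i + 1) * i = 2 * N := by
    simpa [← h, mul_comm] using Nat.add_one_mul_choose_eq i 1
  have h4 : (i + 1) * i % 5 = 4 := by omega
  rw [Nat.mul_mod, Nat.add_mod] at h4
  have := Nat.mod_lt i (show 5 > 0 by norm_num)
  interval_cases i % 5 <;> simp at h4

open PowerSeries

section Coefficients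

variable {R : Type*} [CommRing R]

theorem coeff_X_pow_mul_eq_zero_of_dvd_sub_one {U : R⟦X⟧} {s e N : ℕ}
    (hU : X ^ (s + 1) ∣ U - 1) (hne : e ≠ N) (hN : N ≤ e + s) : coeff N (X ^ e * U) = 0 := by
  rw [coeff_X_pow_mul']
  split_ifs with he
  · have := X_pow_dvd_iff.mp hU (N - e) (by omega)
    rwa [map_sub, coeff_one, if_neg (by omega), sub_zero] at this
  · rfl

theorem coeff_qPochhammer_X_pow_three_eq_zero {N n : ℕ} (hN : N ≤ n)
    (hT : ∀ j : ℕ, j.choose 2 ≠ N) : coeff N (qPochhammer (X : R⟦X⟧) n ^ 3) = 0 := by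
  set E := qPochhammer (X : R⟦X⟧) n
  set c := n.choose 2 + n + n * n
  have key : X ^ c * E ^ 3 = ∑ k ∈ range (2 * n + 2),
      C ((-1) ^ (n + (2 * n + 1 - k)) * k : R) *
        (X ^ (k.choose 2 + n * (2 * n + 1 - k)) * (E * gaussBinom X (2 * n + 1) k)) := by
    have h := congrArg ((-1) ^ n * E * ·) (neg_one_pow_mul_qPochhammer_sq (X : R⟦X⟧) n)
    simp only [mul_sum] at h
    convert h using 1
    · have hsign : ((-1 : R⟦X⟧) ^ n) ^ 2 = 1 := by rw [← pow_mul, pow_mul', neg_one_sq, one_pow]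
      linear_combination (-(X ^ c * E ^ 3)) * hsign
    · refine sum_congr rfl fun k _ => ?_
      simp only [map_mul, map_pow, map_neg, map_one, map_natCast, neg_pow (X ^ n), pow_add, pow_mul]
      ring
  have hshift : coeff N (E ^ 3) = coeff (N + c) (X ^ c * E ^ 3) := by
    rw [coeff_X_pow_mul', if_pos (by omega), Nat.add_sub_cancel]
  rw [hshift, key, map_sum]
  refine sum_eq_zero fun k hk => ?_
  have hk : k ≤ 2 * n + 1 := Nat.lt_succ_iff.mp (mem_range.mp hk)
  obtain ⟨j, hexp, hmin⟩ := exists_choose_two_add_mul_eq hk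
  rw [coeff_C_mul, hexp, coeff_X_pow_mul_eq_zero_of_dvd_sub_one
    (pow_dvd_qPochhammer_mul_gaussBinom_sub_one X n hk) ?_ ?_, mul_zero]
  · have := hT j; omega
  · omega

end Coefficients

section PartitionSeries

variable (R : Type*) [CommSemiring R]

noncomputable def partitionSeries : R⟦X⟧ := PowerSeries.mk fun n => (Fintype.card n.Partition : R)

theorem coeff_partitionSeries_pow (k n : ℕ) :
    coeff n (partitionSeries R ^ k) = coloredPartitions k n := by
  classical
  rw [partitionSeries, ← Fin.prod_const, coeff_prod, coloredPartitions, Nat.cast_sum]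
  refine sum_nbij' (fun l => ⇑l) (fun c => Finsupp.equivFunOnFinite.symm c) ?_ ?_ ?_ ?_ ?_ <;>
    simp [Nat.mem_antidiagonalTuple]

end PartitionSeries

open scoped PowerSeries.WithPiTopology

section InfiniteProduct

variable {R : Type*} [CommRing R] [TopologicalSpace R]

theorem eventually_coeff_qPochhammer_pow_eq [DiscreteTopology R] (k N : ℕ) :
    ∀ᶠ n in Filter.atTop, coeff N (qPochhammer (X : R⟦X⟧) n ^ k) =
      coeff N ((∏' i, (1 - X ^ (i + 1) : R⟦X⟧)) ^ k) := by
  have h := ((WithPiTopology.continuous_coeff R N).tendsto _).comp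
    ((WithPiTopology.multipliable_one_sub_X_pow R).hasProd.tendsto_prod_nat.pow k)
  rwa [nhds_discrete, Filter.tendsto_pure] at h

theorem coeff_tprod_one_sub_X_pow_pow_three_eq_zero [DiscreteTopology R] {N : ℕ}
    (hT : ∀ j : ℕ, j.choose 2 ≠ N) : coeff N ((∏' i, (1 - X ^ (i + 1) : R⟦X⟧)) ^ 3) = 0 := by
  obtain ⟨n, hn, heq⟩ :=
    ((Filter.eventually_ge_atTop N).and (eventually_coeff_qPochhammer_pow_eq (R := R) 3 N)).exists
  rw [← heq]
  exact coeff_qPochhammer_X_pow_three_eq_zero hn hT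

theorem partitionSeries_mul_tprod_one_sub_X_pow [T2Space R] [IsTopologicalRing R] :
    partitionSeries R * ∏' i, (1 - X ^ (i + 1)) = 1 := by
  have h := (Nat.Partition.hasProd_powerSeriesMk_card_restricted R (fun _ => True)).mul
    (WithPiTopology.multipliable_one_sub_X_pow R).hasProd
  have hgeom : ∀ i : ℕ, (∑' j, (X : R⟦X⟧) ^ ((i + 1) * j)) * (1 - X ^ (i + 1)) = 1 := fun i => by
    simp_rw [pow_mul]
    exact WithPiTopology.tsum_pow_mul_one_sub_of_constantCoeff_eq_zero (by simp)
  simp only [if_true, hgeom] at h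
  simpa [partitionSeries, Nat.Partition.restricted] using h.unique hasProd_one

end InfiniteProduct

theorem pow_char_eq_expand {p : ℕ} [Fact p.Prime] (f : (ZMod p)⟦X⟧) :
    f ^ p = expand p (NeZero.ne p) f := by
  have h := MvPowerSeries.map_frobenius_expand (σ := Unit) p (NeZero.ne p) (f := f)
  rw [ZMod.frobenius_zmod, MvPowerSeries.map_id] at h
  exact h.symm

theorem coeff_mul_expand_eq_zero {R : Type*} [CommRing R] {p m : ℕ} (hp : p ≠ 0) {f : R⟦X⟧}
    (hf : ∀ a, a ≡ m [MOD p] → coeff a f = 0) (g : R⟦X⟧) : coeff m (f * expand p hp g) = 0 := by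
  rw [coeff_mul]
  refine sum_eq_zero ?_
  rintro ⟨a, b⟩ hab
  rw [HasAntidiagonal.mem_antidiagonal] at hab
  dsimp only
  by_cases hb : p ∣ b
  · rw [hf a (by simpa [← hab] using ((Nat.modEq_zero_iff_dvd.mpr hb).add_left a).symm), zero_mul]
  · rw [coeff_expand_of_not_dvd p hp g hb, mul_zero]

theorem p2_5n2 (n : ℕ) :
    coloredPartitions (2) (5 * n + 2) ≡ 0 [MOD 5] := by
  have : Fact (Nat.Prime 5) := ⟨by norm_num⟩
  set P := partitionSeries (ZMod 5)
  set F : (ZMod 5)⟦X⟧ := ∏' i, (1 - X ^ (i + 1))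
  have hPF : P * F = 1 := partitionSeries_mul_tprod_one_sub_X_pow
  have hP2 : P ^ 2 = F ^ 3 * expand 5 (NeZero.ne 5) P := by
    rw [← pow_char_eq_expand]
    linear_combination (-(P ^ 2) * (P ^ 2 * F ^ 2 + P * F + 1)) * hPF
  have hcoeff : coeff (5 * n + 2) (P ^ 2) = 0 := by
    rw [hP2]
    refine coeff_mul_expand_eq_zero _ (fun a ha => ?_) P
    exact coeff_tprod_one_sub_X_pow_pow_three_eq_zero (choose_two_ne_of_mod_five (by
      unfold Nat.ModEq at ha; omega))
  rw [coeff_partitionSeries_pow, ZMod.natCast_eq_zero_iff] at hcoeff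
  exact Nat.modEq_zero_iff_dvd.mpr hcoeff
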